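/- Let n be a natural number, G an n×n real matrix, and let V, α, γ, a be real numbers with α + γ ≠ 0. Assume I + Vα·G is invertible and that the matrix M := I − (Vα²/(α + γ))·G·(I + Vα·G)⁻¹ is invertible. Suppose vectors U, Y, ν ∈ ℝⁿ satisfy the two relations ν = (Vα·G)·(U − ν) and (α + γ)·U = a·Y + α·ν. Then U = 𝒢·Y, where 𝒢 = M⁻¹·(a/(α + γ))·I is the communication gain matrix, i.e., 𝒢 = (I − (Vα²/(α + γ))·G·(I + Vα·G)⁻¹)⁻¹·(a/(α + γ)). -/

import Mathlib

/-! The diffusion relation `ν = A (U - ν)` with `A = VαG` solves to `ν = A (1 + A)⁻¹ U`.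
Substituting this into the cell relation turns it into `M U = (a / (α + γ)) Y`, and `M` is
invertible. -/

namespace Matrix

variable {m R : Type*} [Fintype m] [DecidableEq m] [CommRing R]

theorem eq_nonsing_inv_mulVec_of_mulVec_eq {A : Matrix m m R} (hA : IsUnit A) {x y : m → R}
    (h : A *ᵥ x = y) : x = A⁻¹ *ᵥ y := by
  rw [← h, mulVec_mulVec, nonsing_inv_mul _ ((isUnit_iff_isUnit_det A).mp hA), one_mulVec]

theorem eq_mul_inv_one_add_mulVec_of_eq_mulVec_sub {A : Matrix m m R} (hA : IsUnit (1 + A))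
    {U ν : m → R} (h : ν = A *ᵥ (U - ν)) : ν = (A * (1 + A)⁻¹) *ᵥ U := by
  have hsolve : (1 + A) *ᵥ (U - ν) = U := by
    rw [add_mulVec, one_mulVec, ← h, sub_add_cancel]
  rw [← mulVec_mulVec, ← eq_nonsing_inv_mulVec_of_mulVec_eq hA hsolve, ← h]

end Matrix

open Matrix

theorem communication_gain_matrix
    (n : ℕ) (G : Matrix (Fin n) (Fin n) ℝ)
    (V α γ a : ℝ) (hαγ : α + γ ≠ 0)
    (h1 : IsUnit (1 + (V * α) • G))
    (h2 : IsUnit ((1 : Matrix (Fin n) (Fin n) ℝ) -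
        (V * α ^ 2 / (α + γ)) • (G * (1 + (V * α) • G)⁻¹)))
    (U Y ν : Fin n → ℝ)
    (hν : ν = ((V * α) • G).mulVec (U - ν))
    (hU : (α + γ) • U = a • Y + α • ν) :
    U = (((1 : Matrix (Fin n) (Fin n) ℝ) -
        (V * α ^ 2 / (α + γ)) • (G * (1 + (V * α) • G)⁻¹))⁻¹ *
        (a / (α + γ)) • (1 : Matrix (Fin n) (Fin n) ℝ)).mulVec Y := by
  have hν' : (α / (α + γ)) • ν =
      (V * α ^ 2 / (α + γ)) • ((G * (1 + (V * α) • G)⁻¹) *ᵥ U) := by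
    rw [eq_mul_inv_one_add_mulVec_of_eq_mulVec_sub h1 hν, smul_mul, smul_mulVec, smul_smul]
    ring_nf
  have hU' : U = (a / (α + γ)) • Y + (α / (α + γ)) • ν := by
    rw [div_eq_inv_mul, div_eq_inv_mul, ← smul_smul, ← smul_smul, ← smul_add, ← hU,
      smul_smul, inv_mul_cancel₀ hαγ, one_smul]
  have hgain : ((1 : Matrix (Fin n) (Fin n) ℝ) -
      (V * α ^ 2 / (α + γ)) • (G * (1 + (V * α) • G)⁻¹)) *ᵥ U = (a / (α + γ)) • Y := by
    rw [sub_mulVec, one_mulVec, smul_mulVec, ← hν']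
    nth_rewrite 1 [hU']
    exact add_sub_cancel_right _ _
  rw [eq_nonsing_inv_mulVec_of_mulVec_eq h2 hgain, Matrix.mul_smul, Matrix.mul_one, smul_mulVec,
    mulVec_smul]
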